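/- arXiv:2310.08223 — 3 statements merged into one kernel-verified Lean document; each statement's English description precedes it below -/
import Mathlib

section
/- Let 0 < ρ < 1 and μ, γ > 0 constants, and σ_n defined by σ_n = (2|n|ρ^{|n|} + (μ n² + γ ρ^{2|n|})(1 + ρ^{2|n|})) / (2|n|ρ^{|n|} + (μ n² + γ ρ^{2|n|})(1 − ρ^{2|n|})). Then there exists a constant C > 0, depending only on μ, γ, ρ, such that |σ_n − 1|² · |n| ≤ C · |n| · ρ^{4|n|} for all nonzero integers n. -/
/-- The Fourier multiplier of the DtN map for a circular inclusion of radius `ρ`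
with constant boundary coefficients `μ, γ`. -/
noncomputable def sigmaMult (ρ μ γ : ℝ) (n : ℤ) : ℝ :=
  (2 * (n.natAbs : ℝ) * ρ ^ n.natAbs
      + (μ * (n : ℝ) ^ 2 + γ * ρ ^ (2 * n.natAbs)) * (1 + ρ ^ (2 * n.natAbs)))
    / (2 * (n.natAbs : ℝ) * ρ ^ n.natAbs
      + (μ * (n : ℝ) ^ 2 + γ * ρ ^ (2 * n.natAbs)) * (1 - ρ ^ (2 * n.natAbs)))

/-! With `k = |n|`, `E = ρ^{2k}` and `A = μ n² + γ E > 0`, the multiplier is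
`(a + A (1 + E)) / (a + A (1 - E))` with `a = 2kρ^k ≥ 0`, so `σ_n - 1 = 2AE / (a + A (1 - E))`.
The denominator is at least `A (1 - ρ²)`, hence `0 ≤ σ_n - 1 ≤ 2ρ^{2k} / (1 - ρ²)`, and
`C = (2 / (1 - ρ²))²` works. -/

lemma abs_add_mul_one_add_div_sub_one_le {a b e q : ℝ} (ha : 0 ≤ a) (hb : 0 < b)
    (he : 0 ≤ e) (heq : e ≤ q) (hq : q < 1) :
    |(a + b * (1 + e)) / (a + b * (1 - e)) - 1| ≤ 2 * e / (1 - q) := by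
  have hq' : 0 < 1 - q := sub_pos.mpr hq
  have hden : b * (1 - q) ≤ a + b * (1 - e) := by nlinarith
  have hden_pos : 0 < a + b * (1 - e) := (mul_pos hb hq').trans_le hden
  have hsub : (a + b * (1 + e)) / (a + b * (1 - e)) - 1 = 2 * b * e / (a + b * (1 - e)) := by
    field_simp
    ring
  rw [hsub, abs_of_nonneg (by positivity)]
  calc 2 * b * e / (a + b * (1 - e)) ≤ 2 * b * e / (b * (1 - q)) :=
        div_le_div_of_nonneg_left (by positivity) (by positivity) hden
    _ = 2 * e / (1 - q) := by field_simp

lemma abs_sigmaMult_sub_one_le {ρ μ γ : ℝ} (hρ0 : 0 < ρ) (hρ1 : ρ < 1) (hμ : 0 < μ)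
    (hγ : 0 < γ) {n : ℤ} (hn : n ≠ 0) :
    |sigmaMult ρ μ γ n - 1| ≤ 2 * ρ ^ (2 * n.natAbs) / (1 - ρ ^ 2) := by
  have hk : 1 ≤ n.natAbs := Int.natAbs_pos.mpr hn
  have hE : ρ ^ (2 * n.natAbs) ≤ ρ ^ 2 :=
    pow_le_pow_of_le_one hρ0.le hρ1.le (by omega)
  exact abs_add_mul_one_add_div_sub_one_le (by positivity)
    (by positivity) (by positivity) hE
    (pow_lt_one₀ hρ0.le hρ1 two_ne_zero)

/-- there is a constant `C > 0`, depending only on `μ, γ, ρ`, such that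
`|σ_n − 1|² |n| ≤ C |n| ρ^{4|n|}` for all nonzero integers `n`. -/
theorem sigma_sub_one_sq_bound (ρ μ γ : ℝ) (hρ0 : 0 < ρ) (hρ1 : ρ < 1)
    (hμ : 0 < μ) (hγ : 0 < γ) :
    ∃ C > 0, ∀ n : ℤ, n ≠ 0 →
      |sigmaMult ρ μ γ n - 1| ^ 2 * (n.natAbs : ℝ)
        ≤ C * (n.natAbs : ℝ) * ρ ^ (4 * n.natAbs) := by
  have hq : 0 < 1 - ρ ^ 2 := sub_pos.mpr (pow_lt_one₀ hρ0.le hρ1 two_ne_zero)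
  refine ⟨(2 / (1 - ρ ^ 2)) ^ 2, by positivity, fun n hn => ?_⟩
  have hsq : |sigmaMult ρ μ γ n - 1| ^ 2 ≤ (2 / (1 - ρ ^ 2)) ^ 2 * ρ ^ (4 * n.natAbs) :=
    calc |sigmaMult ρ μ γ n - 1| ^ 2 ≤ (2 * ρ ^ (2 * n.natAbs) / (1 - ρ ^ 2)) ^ 2 :=
          pow_le_pow_left₀ (abs_nonneg _) (abs_sigmaMult_sub_one_le hρ0 hρ1 hμ hγ hn) 2
      _ = (2 / (1 - ρ ^ 2)) ^ 2 * ρ ^ (4 * n.natAbs) := by ring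
  calc |sigmaMult ρ μ γ n - 1| ^ 2 * (n.natAbs : ℝ)
      ≤ (2 / (1 - ρ ^ 2)) ^ 2 * ρ ^ (4 * n.natAbs) * n.natAbs :=
        mul_le_mul_of_nonneg_right hsq n.natAbs.cast_nonneg
    _ = (2 / (1 - ρ ^ 2)) ^ 2 * n.natAbs * ρ ^ (4 * n.natAbs) := by ring
end

section
/- Let T be the multiplier operator on periodic Sobolev spaces defined by (Tf)(θ) = σ₀ f₀ + Σ_{n≠0} |n|(σ_n − 1) f_n e^{inθ}, where σ_n − 1 satisfies |σ_n − 1| ≤ C ρ^{2|n|} for some C > 0 and ρ ∈ (0,1), and σ₀ ∈ ℝ. Then T is a compact operator from H^{1/2}_{per}[0,2π] to H^{−1/2}_{per}[0,2π]; indeed T maps H^{1/2}_{per} boundedly into H^{s}_{per} for every s, and the finite-rank truncations converge to T in operator norm. -/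
/-!
A diagonal operator on `ℓ²` whose symbol tends to zero is, in operator norm, within `ε` of its
truncation to the finitely many indices where the symbol has size at least `ε / 2`; these
truncations have finite rank, and compact operators form a closed set containing the finite-rank
ones. Here the symbol decays geometrically, and geometric decay beats every polynomial weight,
which is the smoothing into every `H^s_per`.
-/

open Filter Topology
open scoped ENNReal

theorem isCompactOperator_of_finiteDimensional_range {𝕜 E F : Type*} [NontriviallyNormedField 𝕜]
    [LocallyCompactSpace 𝕜] [NormedAddCommGroup E] [NormedSpace 𝕜 E] [NormedAddCommGroup F]
    [NormedSpace 𝕜 F] (T : E →L[𝕜] F) [FiniteDimensional 𝕜 (LinearMap.range T.toLinearMap)] :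
    IsCompactOperator T := by
  have := FiniteDimensional.proper 𝕜 (LinearMap.range T.toLinearMap)
  exact (isCompactOperator_of_locallyCompactSpace_dom T.rangeRestrict).clm_comp
    (Submodule.subtypeL _)

theorem isCompactOperator_of_forall_exists_finiteDimensional_range_norm_sub_lt
    {𝕜 E F : Type*} [NontriviallyNormedField 𝕜] [LocallyCompactSpace 𝕜] [NormedAddCommGroup E]
    [NormedSpace 𝕜 E] [NormedAddCommGroup F] [NormedSpace 𝕜 F] [CompleteSpace F] (T : E →L[𝕜] F)
    (hT : ∀ ε > 0, ∃ T' : E →L[𝕜] F,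
      FiniteDimensional 𝕜 (LinearMap.range T'.toLinearMap) ∧ ‖T - T'‖ < ε) :
    IsCompactOperator T := by
  refine isClosed_setOfPred_isCompactOperator.closure_subset
    (Metric.mem_closure_iff.2 fun ε hε => ?_)
  obtain ⟨T', hT'fin, hT'⟩ := hT ε hε
  exact ⟨T', isCompactOperator_of_finiteDimensional_range T', by rwa [dist_eq_norm]⟩

theorem Memℓp.mul_of_infty_left {ι 𝕜 : Type*} [NormedRing 𝕜] {p : ℝ≥0∞} {d f : ι → 𝕜}
    (hd : Memℓp d ∞) (hf : Memℓp f p) : Memℓp (d * f) p := by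
  obtain ⟨M, hM⟩ := memℓp_infty_iff.1 hd
  refine (hf.norm.const_mul M).mono fun i => ?_
  calc ‖d i * f i‖ ≤ ‖d i‖ * ‖f i‖ := norm_mul_le _ _
    _ ≤ M * ‖f i‖ := by gcongr; exact hM ⟨i, rfl⟩

theorem memℓp_infty_of_tendsto_cofinite_zero {ι E : Type*} [NormedAddCommGroup E] {d : ι → E}
    (hd : Tendsto d cofinite (𝓝 0)) : Memℓp d ∞ :=
  memℓp_infty_iff.2 hd.norm.bddAbove_range_of_cofinite

namespace lp

variable {ι 𝕜 : Type*} [RCLike 𝕜] {p : ℝ≥0∞} [Fact (1 ≤ p)]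

local notation "ℓᵖ" => lp (fun _ : ι => 𝕜) p

theorem norm_le_mul_norm_of_forall_norm_apply_le {M : ℝ} (hM : 0 ≤ M) {f g : ℓᵖ}
    (h : ∀ i, ‖g i‖ ≤ M * ‖f i‖) : ‖g‖ ≤ M * ‖f‖ := by
  have hp : p ≠ 0 := (zero_lt_one.trans_le Fact.out).ne'
  calc ‖g‖ ≤ ‖(M : 𝕜) • f‖ := lp.norm_mono hp fun i => by
        rw [lp.coeFn_smul, Pi.smul_apply, smul_eq_mul, norm_mul, RCLike.norm_ofReal,
          abs_of_nonneg hM]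
        exact h i
    _ = M * ‖f‖ := by rw [lp.norm_const_smul hp, RCLike.norm_ofReal, abs_of_nonneg hM]

theorem opNorm_le_of_forall_apply_eq_mul (T : ℓᵖ →L[𝕜] ℓᵖ) {d : ι → 𝕜} {M : ℝ} (hM : 0 ≤ M)
    (hdM : ∀ i, ‖d i‖ ≤ M) (hT : ∀ f i, T f i = d i * f i) : ‖T‖ ≤ M :=
  T.opNorm_le_bound hM fun f => norm_le_mul_norm_of_forall_norm_apply_le hM fun i => by
    rw [hT, norm_mul]
    exact mul_le_mul_of_nonneg_right (hdM i) (norm_nonneg _)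

noncomputable def diagonal (d : ι → 𝕜) (hd : Memℓp d ∞) : ℓᵖ →L[𝕜] ℓᵖ :=
  LinearMap.mkContinuousOfExistsBound
    { toFun := fun f => ⟨fun i => d i * f i, hd.mul_of_infty_left (lp.memℓp f)⟩
      map_add' := fun f g => lp.ext <| funext fun i => mul_add (d i) (f i) (g i)
      map_smul' := fun c f => lp.ext <| funext fun i => mul_smul_comm c (d i) (f i) }
    (by
      obtain ⟨M, hM⟩ := memℓp_infty_iff.1 hd
      refine ⟨max M 0, fun f => norm_le_mul_norm_of_forall_norm_apply_le (le_max_right _ _)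
        fun i => ?_⟩
      calc ‖d i * f i‖ ≤ ‖d i‖ * ‖f i‖ := norm_mul_le _ _
        _ ≤ max M 0 * ‖f i‖ := by gcongr; exact (hM ⟨i, rfl⟩).trans (le_max_left _ _))

@[simp]
theorem diagonal_apply (d : ι → 𝕜) (hd : Memℓp d ∞) (f : ℓᵖ) (i : ι) :
    diagonal d hd f i = d i * f i :=
  rfl

theorem finiteDimensional_range_diagonal {d : ι → 𝕜} (hd : Memℓp d ∞)
    (hfin : (Function.support d).Finite) :
    FiniteDimensional 𝕜 (LinearMap.range (diagonal (p := p) d hd).toLinearMap) := by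
  classical
  set S := hfin.toFinset
  have hsum : ∀ f : ℓᵖ, diagonal d hd f = ∑ i ∈ S, lp.single p i (d i * f i) := fun f => by
    ext j
    rw [lp.coeFn_sum, Finset.sum_apply]
    simp only [lp.coeFn_single, Finset.sum_pi_single, diagonal_apply]
    split_ifs with hj
    · rfl
    · rw [Set.Finite.mem_toFinset, Function.notMem_support] at hj
      rw [hj, zero_mul]
  have hle : LinearMap.range (diagonal (p := p) d hd).toLinearMap ≤
      Submodule.span 𝕜 ((fun i => lp.single p i (1 : 𝕜)) '' S) := by
    rintro _ ⟨f, rfl⟩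
    rw [ContinuousLinearMap.coe_coe, hsum f]
    refine Submodule.sum_mem _ fun i hi => ?_
    rw [← mul_one (d i * f i), ← smul_eq_mul, lp.single_smul]
    exact Submodule.smul_mem _ _ (Submodule.subset_span ⟨i, hi, rfl⟩)
  have := FiniteDimensional.span_of_finite 𝕜 (S.finite_toSet.image fun i => lp.single p i (1 : 𝕜))
  exact Submodule.finiteDimensional_of_le hle

theorem exists_finiteDimensional_range_norm_diagonal_sub_lt {d : ι → 𝕜}
    (hd : Tendsto d cofinite (𝓝 0)) {ε : ℝ} (hε : 0 < ε) :
    ∃ T' : ℓᵖ →L[𝕜] ℓᵖ, FiniteDimensional 𝕜 (LinearMap.range T'.toLinearMap) ∧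
      ‖diagonal d (memℓp_infty_of_tendsto_cofinite_zero hd) - T'‖ < ε := by
  classical
  set S := {i | ε / 2 ≤ ‖d i‖}
  have hS : S.Finite := by
    have hsmall : ∀ᶠ i in cofinite, ‖d i‖ < ε / 2 :=
      hd.norm.eventually (gt_mem_nhds (by simpa using half_pos hε))
    simpa [S] using eventually_cofinite.1 hsmall
  have he : Memℓp (S.indicator d) ∞ :=
    (memℓp_infty_of_tendsto_cofinite_zero hd).mono' fun i => norm_indicator_le_norm_self d i
  refine ⟨diagonal (S.indicator d) he,
    finiteDimensional_range_diagonal he (hS.subset Set.support_indicator_subset), ?_⟩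
  refine (opNorm_le_of_forall_apply_eq_mul _ (d := d - S.indicator d) (half_pos hε).le
    (fun i => ?_) fun f i => ?_).trans_lt (half_lt_self hε)
  · by_cases hi : i ∈ S
    · simp [Set.indicator_of_mem hi, (half_pos hε).le]
    · simpa [Set.indicator_of_notMem hi, S] using (not_le.1 hi).le
  · simp [sub_mul]

end lp

section GeometricDecay

variable {E : Type*} [SeminormedAddCommGroup E] {a : ℤ → E} {C r : ℝ}

theorem Int.tendsto_natAbs_cofinite_atTop : Tendsto Int.natAbs cofinite atTop := by
  rw [← Nat.cofinite_eq_atTop]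
  refine Tendsto.cofinite_of_finite_preimage_singleton fun k => ?_
  refine ((Set.toFinite {(k : ℤ), -(k : ℤ)}).subset fun n hn => ?_).to_subtype
  exact Int.natAbs_eq_iff.1 hn

theorem tendsto_cofinite_zero_of_norm_le_geometric (hr0 : 0 ≤ r) (hr1 : r < 1)
    (ha : ∀ n : ℤ, n ≠ 0 → ‖a n‖ ≤ C * r ^ n.natAbs) : Tendsto a cofinite (𝓝 0) := by
  refine squeeze_zero_norm' ((eventually_cofinite_ne 0).mono ha) ?_
  simpa using ((tendsto_pow_atTop_nhds_zero_of_lt_one hr0 hr1).comp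
    Int.tendsto_natAbs_cofinite_atTop).const_mul C

theorem exists_forall_rpow_mul_pow_le (hr0 : 0 ≤ r) (hr1 : r < 1) (s : ℝ) :
    ∃ B ≥ 0, ∀ k : ℕ, 1 ≤ k → (k : ℝ) ^ s * r ^ k ≤ B := by
  obtain ⟨B, hB⟩ := (tendsto_pow_const_mul_const_pow_of_lt_one ⌈s⌉₊ hr0 hr1).bddAbove_range
  refine ⟨max B 0, le_max_right _ _, fun k hk => ?_⟩
  have hk' : (1 : ℝ) ≤ k := by exact_mod_cast hk
  calc (k : ℝ) ^ s * r ^ k ≤ (k : ℝ) ^ (⌈s⌉₊ : ℝ) * r ^ k := by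
        gcongr
        exact Nat.le_ceil s
    _ = (k : ℝ) ^ ⌈s⌉₊ * r ^ k := by rw [Real.rpow_natCast]
    _ ≤ max B 0 := (hB ⟨k, rfl⟩).trans (le_max_left _ _)

theorem exists_pos_forall_rpow_mul_norm_le_of_norm_le_geometric (hr0 : 0 ≤ r) (hr1 : r < 1)
    (ha : ∀ n : ℤ, n ≠ 0 → ‖a n‖ ≤ C * r ^ n.natAbs) (s : ℝ) :
    ∃ Cs > 0, ∀ n : ℤ, n ≠ 0 → (n.natAbs : ℝ) ^ s * ‖a n‖ ≤ Cs := by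
  obtain ⟨B, hB0, hB⟩ := exists_forall_rpow_mul_pow_le hr0 hr1 s
  refine ⟨|C| * B + 1, by positivity, fun n hn => ?_⟩
  have hk : 1 ≤ n.natAbs := Int.natAbs_pos.2 hn
  have hw : 0 ≤ (n.natAbs : ℝ) ^ s * r ^ n.natAbs := by positivity
  calc (n.natAbs : ℝ) ^ s * ‖a n‖ ≤ (n.natAbs : ℝ) ^ s * (C * r ^ n.natAbs) := by
        gcongr; exact ha n hn
    _ = C * ((n.natAbs : ℝ) ^ s * r ^ n.natAbs) := by ring
    _ ≤ |C| * B := mul_le_mul (le_abs_self C) (hB _ hk) hw (abs_nonneg C)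
    _ ≤ |C| * B + 1 := le_add_of_nonneg_right zero_le_one

end GeometricDecay

theorem multiplier_operator_compact_general (ρ C σ₀ : ℝ) (σ : ℤ → ℝ)
    (hρ0 : 0 < ρ) (hρ1 : ρ < 1)
    (hσ : ∀ n : ℤ, n ≠ 0 → |σ n - 1| ≤ C * ρ ^ (2 * n.natAbs)) :
    ∃ T : lp (fun _ : ℤ => ℂ) 2 →L[ℂ] lp (fun _ : ℤ => ℂ) 2,
      (∀ (f : lp (fun _ : ℤ => ℂ) 2) (n : ℤ),
        (T f : ∀ _ : ℤ, ℂ) n = (if n = 0 then (σ₀ : ℂ) else ((σ n - 1 : ℝ) : ℂ))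
          * (f : ∀ _ : ℤ, ℂ) n) ∧
      (∀ s : ℝ, ∃ Cs > 0, ∀ n : ℤ, n ≠ 0 →
        ((n.natAbs : ℝ)) ^ s * |σ n - 1| ≤ Cs) ∧
      IsCompactOperator T ∧
      (∀ ε > 0, ∃ T' : lp (fun _ : ℤ => ℂ) 2 →L[ℂ] lp (fun _ : ℤ => ℂ) 2,
        FiniteDimensional ℂ (LinearMap.range T'.toLinearMap) ∧ ‖T - T'‖ < ε) := by
  set d : ℤ → ℂ := fun n => if n = 0 then (σ₀ : ℂ) else ((σ n - 1 : ℝ) : ℂ)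
  have hρ2 : ρ ^ 2 < 1 := pow_lt_one₀ hρ0.le hρ1 two_ne_zero
  have hσ' : ∀ n : ℤ, n ≠ 0 → ‖σ n - 1‖ ≤ C * (ρ ^ 2) ^ n.natAbs := fun n hn => by
    rw [Real.norm_eq_abs, ← pow_mul]
    exact hσ n hn
  have hd : Tendsto d cofinite (𝓝 0) :=
    tendsto_cofinite_zero_of_norm_le_geometric (sq_nonneg ρ) hρ2 fun n hn => by
      simp only [d, if_neg hn, Complex.norm_real]
      exact hσ' n hn
  have happrox := fun ε (hε : 0 < ε) =>
    lp.exists_finiteDimensional_range_norm_diagonal_sub_lt (p := 2) hd hε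
  refine ⟨lp.diagonal d (memℓp_infty_of_tendsto_cofinite_zero hd), fun f n => rfl, fun s => ?_,
    isCompactOperator_of_forall_exists_finiteDimensional_range_norm_sub_lt _ happrox, happrox⟩
  simpa only [Real.norm_eq_abs] using
    exists_pos_forall_rpow_mul_norm_le_of_norm_le_geometric (sq_nonneg ρ) hρ2 hσ' s

/-- the current-gap multiplier operator `(Tf)(θ) = σ₀ f₀ + Σ_{n≠0} |n|(σ_n−1) f_n e^{inθ}`,
viewed through the unitary identification of `H^{1/2}_per` and `H^{−1/2}_per` with
`ℓ²(ℤ)` (sending `f` to its weighted Fourier coefficient sequence), acts diagonally with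
symbol `d n = σ₀` for `n = 0` and `d n = σ_n − 1` for `n ≠ 0`.  Under the geometric bound
`|σ_n − 1| ≤ C ρ^{2|n|}` this diagonal operator exists as a bounded operator on `ℓ²(ℤ)`,
its symbol is rapidly decaying against every polynomial weight (so `T` maps `H^{1/2}_per`
boundedly into every `H^s_per`), it is a compact operator, and it is the operator-norm
limit of finite-rank operators. -/
theorem multiplier_operator_compact (ρ C σ₀ : ℝ) (σ : ℤ → ℝ)
    (hρ0 : 0 < ρ) (hρ1 : ρ < 1) (hC : 0 < C)
    (hσ : ∀ n : ℤ, n ≠ 0 → |σ n - 1| ≤ C * ρ ^ (2 * n.natAbs)) :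
    ∃ T : lp (fun _ : ℤ => ℂ) 2 →L[ℂ] lp (fun _ : ℤ => ℂ) 2,
      (∀ (f : lp (fun _ : ℤ => ℂ) 2) (n : ℤ),
        (T f : ∀ _ : ℤ, ℂ) n = (if n = 0 then (σ₀ : ℂ) else ((σ n - 1 : ℝ) : ℂ))
          * (f : ∀ _ : ℤ, ℂ) n) ∧
      (∀ s : ℝ, ∃ Cs > 0, ∀ n : ℤ, n ≠ 0 →
        ((n.natAbs : ℝ)) ^ s * |σ n - 1| ≤ Cs) ∧
      IsCompactOperator T ∧
      (∀ ε > 0, ∃ T' : lp (fun _ : ℤ => ℂ) 2 →L[ℂ] lp (fun _ : ℤ => ℂ) 2,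
        FiniteDimensional ℂ (LinearMap.range T'.toLinearMap) ∧ ‖T - T'‖ < ε) :=
  multiplier_operator_compact_general ρ C σ₀ σ hρ0 hρ1 hσ
end

section
/- Let μ₁, μ₂ ∈ C(∂D) satisfy the uniform definiteness assumptions, and suppose ∫_{∂D} ∇_{∂D}φ̄ · (μ₁ − μ₂) ∇_{∂D}φ ds = 0 for all φ ∈ H¹(∂D). If additionally at some point x₀ ∈ ∂D one has −Re⟨ξ, (μ₁−μ₂)(x₀) ξ⟩ ≥ β₀|ξ|² for all ξ with some β₀ > 0, then one reaches a contradiction with the existence of a nonconstant smooth φ supported near x₀; consequently μ₁ = μ₂ on ∂D. -/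
/-!
Near `x₀` the form `-Re⟨ξ, (μ₁ - μ₂)(x) ξ⟩` stays coercive with constant `β₀ / 2`, because
`|⟨ξ, B ξ⟩| ≤ ‖B‖ |ξ|²` for the `L²` operator norm, which induces the usual topology on
matrices. A test function whose gradient is supported in that neighbourhood then makes the real
part of the vanishing integral a vanishing integral of a nonnegative function bounded below by
`β₀ / 2 · |∇φ|²`, so `∇φ = 0` almost everywhere, contrary to the choice of `φ`.
-/

open MeasureTheory Filter Topology Matrix
open scoped Matrix.Norms.L2Operator

section
variable {n : Type*} [Fintype n]

lemma re_star_dotProduct_self (ξ : n → ℂ) :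
    (star ξ ⬝ᵥ ξ).re = ‖(WithLp.toLp 2 ξ : EuclideanSpace ℂ n)‖ ^ 2 := by
  rw [← inner_self_eq_norm_sq (𝕜 := ℂ), EuclideanSpace.inner_toLp_toLp, dotProduct_comm]
  rfl

lemma re_star_dotProduct_self_nonneg (ξ : n → ℂ) : 0 ≤ (star ξ ⬝ᵥ ξ).re := by
  rw [re_star_dotProduct_self]
  positivity

lemma norm_star_dotProduct_mulVec_le [DecidableEq n] (B : Matrix n n ℂ) (ξ : n → ℂ) :
    ‖star ξ ⬝ᵥ B *ᵥ ξ‖ ≤ ‖B‖ * (star ξ ⬝ᵥ ξ).re := by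
  set x : EuclideanSpace ℂ n := WithLp.toLp 2 ξ
  rw [re_star_dotProduct_self, dotProduct_comm, ← EuclideanSpace.inner_toLp_toLp]
  calc _ ≤ ‖x‖ * ‖(WithLp.toLp 2 (B *ᵥ ξ) : EuclideanSpace ℂ n)‖ := norm_inner_le_norm _ _
    _ ≤ ‖x‖ * (‖B‖ * ‖x‖) := mul_le_mul_of_nonneg_left (B.l2_opNorm_mulVec x) (norm_nonneg _)
    _ = ‖B‖ * ‖x‖ ^ 2 := by ring

lemma eventually_forall_neg_re_star_dotProduct_mulVec_ge [DecidableEq n] {X : Type*}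
    [TopologicalSpace X] {A : X → Matrix n n ℂ} {x₀ : X} (hA : ContinuousAt A x₀)
    {β β' : ℝ} (hβ' : β' < β)
    (hx₀ : ∀ ξ : n → ℂ, β * (star ξ ⬝ᵥ ξ).re ≤ -(star ξ ⬝ᵥ A x₀ *ᵥ ξ).re) :
    ∀ᶠ x in 𝓝 x₀, ∀ ξ : n → ℂ, β' * (star ξ ⬝ᵥ ξ).re ≤ -(star ξ ⬝ᵥ A x *ᵥ ξ).re := by
  have hnear : ∀ᶠ x in 𝓝 x₀, ‖A x - A x₀‖ < β - β' :=
    (hA.sub continuous_const.continuousAt).norm.eventually (gt_mem_nhds (by simpa))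
  filter_upwards [hnear] with x hx ξ
  have hsplit : star ξ ⬝ᵥ A x *ᵥ ξ = star ξ ⬝ᵥ A x₀ *ᵥ ξ + star ξ ⬝ᵥ (A x - A x₀) *ᵥ ξ := by
    rw [sub_mulVec, dotProduct_sub]; ring
  have hpert : (star ξ ⬝ᵥ (A x - A x₀) *ᵥ ξ).re ≤ (β - β') * (star ξ ⬝ᵥ ξ).re :=
    (Complex.re_le_norm _).trans <| (norm_star_dotProduct_mulVec_le _ ξ).trans <|
      mul_le_mul_of_nonneg_right hx.le (re_star_dotProduct_self_nonneg ξ)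
  rw [hsplit, Complex.add_re]
  linarith [hx₀ ξ]

lemma ae_eq_zero_of_integral_star_dotProduct_mulVec_eq_zero {S : Type*} [MeasurableSpace S]
    {σ : Measure S} {A : S → Matrix n n ℂ} {v : S → n → ℂ} {c : ℝ} (hc : 0 < c)
    (hcoercive : ∀ s, c * (star (v s) ⬝ᵥ v s).re ≤ -(star (v s) ⬝ᵥ A s *ᵥ v s).re)
    (hint : Integrable (fun s => star (v s) ⬝ᵥ A s *ᵥ v s) σ)
    (hzero : ∫ s, star (v s) ⬝ᵥ A s *ᵥ v s ∂σ = 0) :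
    ∀ᵐ s ∂σ, v s = 0 := by
  have hnonneg : 0 ≤ fun s => -(star (v s) ⬝ᵥ A s *ᵥ v s).re := fun s =>
    (mul_nonneg hc.le (re_star_dotProduct_self_nonneg _)).trans (hcoercive s)
  have hre : ∫ s, -(star (v s) ⬝ᵥ A s *ᵥ v s).re ∂σ = 0 := by
    rw [integral_neg, neg_eq_zero]
    simpa [hzero] using integral_re hint
  filter_upwards [(integral_eq_zero_iff_of_nonneg hnonneg hint.re.neg).mp hre] with s hs
  have hsq : ‖(WithLp.toLp 2 (v s) : EuclideanSpace ℂ n)‖ ^ 2 ≤ 0 := by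
    rw [← re_star_dotProduct_self]
    nlinarith [hcoercive s, show -(star (v s) ⬝ᵥ A s *ᵥ v s).re = 0 from hs]
  simpa using hsq
end

theorem mu_uniqueness_core_general
    {S : Type*} [TopologicalSpace S] [MeasurableSpace S]
    (σm : Measure S) (m : ℕ)
    (μ₁ μ₂ : S → Matrix (Fin m) (Fin m) ℂ)
    (hμ₁cont : Continuous μ₁) (hμ₂cont : Continuous μ₂)
    (G : (S → ℂ) → S → (Fin m → ℂ))
    (TestFuns : Set (S → ℂ))
    (hInt : ∀ φ ∈ TestFuns,
      Integrable (fun s => dotProduct (star (G φ s)) ((μ₁ s - μ₂ s).mulVec (G φ s))) σm)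
    (hQ : ∀ φ ∈ TestFuns,
      ∫ s, dotProduct (star (G φ s)) ((μ₁ s - μ₂ s).mulVec (G φ s)) ∂σm = 0)
    (hTest : ∀ U : Set S, IsOpen U → U.Nonempty →
      ∃ φ ∈ TestFuns, (∀ s ∉ U, G φ s = 0) ∧ ¬ (∀ᵐ s ∂σm, G φ s = 0))
    (hdicho : μ₁ ≠ μ₂ → ∃ x₀ : S, ∃ β₀ > (0 : ℝ), ∀ ξ : Fin m → ℂ,
      β₀ * (dotProduct (star ξ) ξ).re
        ≤ - (dotProduct (star ξ) ((μ₁ x₀ - μ₂ x₀).mulVec ξ)).re) :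
    μ₁ = μ₂ := by
  by_contra hne
  obtain ⟨x₀, β₀, hβ₀, hx₀⟩ := hdicho hne
  obtain ⟨U, hU, hUopen, hx₀U⟩ := eventually_nhds_iff.mp <|
    eventually_forall_neg_re_star_dotProduct_mulVec_ge (hμ₁cont.sub hμ₂cont).continuousAt
      (half_lt_self hβ₀) hx₀
  obtain ⟨φ, hφ, hφU, hφ_ne⟩ := hTest U hUopen ⟨x₀, hx₀U⟩
  refine hφ_ne <| ae_eq_zero_of_integral_star_dotProduct_mulVec_eq_zero (half_pos hβ₀)
    (fun s => ?_) (hInt φ hφ) (hQ φ hφ)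
  by_cases hs : s ∈ U
  · exact hU s hs _
  · simp [hφU s hs]

/-- core of the uniqueness argument for the coefficient `μ`: `S` plays
the role of the closed `C²` surface `∂D` with its surface measure `σm`, `G φ` denotes
the surface gradient `∇_{∂D} φ` of a test function `φ`, and `TestFuns` the test class
`H¹(∂D)` (containing, for every nonempty open subset, a smooth compactly supported
function with nonvanishing gradient).  If the quadratic form
`∫_{∂D} ∇_{∂D}φ̄ · (μ₁ − μ₂) ∇_{∂D}φ ds` vanishes for all test functions, and whenever
`μ₁ ≠ μ₂` there is (WLOG) a point `x₀` at which `−Re⟨ξ, (μ₁−μ₂)(x₀)ξ⟩ ≥ β₀|ξ|²` for some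
`β₀ > 0`, then `μ₁ = μ₂` on `∂D`. -/
theorem mu_uniqueness_core
    {S : Type*} [TopologicalSpace S] [MeasurableSpace S] [BorelSpace S]
    (σm : Measure S) [σm.IsOpenPosMeasure] (m : ℕ)
    (μ₁ μ₂ : S → Matrix (Fin m) (Fin m) ℂ)
    (hμ₁cont : Continuous μ₁) (hμ₂cont : Continuous μ₂)
    (G : (S → ℂ) → S → (Fin m → ℂ))
    (TestFuns : Set (S → ℂ))
    (hInt : ∀ φ ∈ TestFuns,
      Integrable (fun s => dotProduct (star (G φ s)) ((μ₁ s - μ₂ s).mulVec (G φ s))) σm)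
    (hQ : ∀ φ ∈ TestFuns,
      ∫ s, dotProduct (star (G φ s)) ((μ₁ s - μ₂ s).mulVec (G φ s)) ∂σm = 0)
    (hTest : ∀ U : Set S, IsOpen U → U.Nonempty →
      ∃ φ ∈ TestFuns, (∀ s ∉ U, G φ s = 0) ∧ ¬ (∀ᵐ s ∂σm, G φ s = 0))
    (hdicho : μ₁ ≠ μ₂ → ∃ x₀ : S, ∃ β₀ > (0 : ℝ), ∀ ξ : Fin m → ℂ,
      β₀ * (dotProduct (star ξ) ξ).re
        ≤ - (dotProduct (star ξ) ((μ₁ x₀ - μ₂ x₀).mulVec ξ)).re) :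
    μ₁ = μ₂ :=
  mu_uniqueness_core_general σm m μ₁ μ₂ hμ₁cont hμ₂cont G TestFuns hInt hQ hTest hdicho
end
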